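/- Let Δ ≥ 0, k ∈ ℕ, and γ > 0. Write k₁ = k + 1/2 and r₁ = −γ/2 + √(k₁ + γ²/4). Then 0 ≤ ∫_{{r > 0 : |r − r₁| ≥ Δ}} r·e^{−r²}·( ∫_{−π}^{π} (r² + γ² + 2γr·cos θ)^k dθ ) dr ≤ 2π^{3/2}·(r₁ + γ)^{2k+1}·e^{−r₁²}·(1 − erf(Δ)). -/

import Mathlib

open MeasureTheory

/-- The error function `erf z = (2/√π) ∫₀^z e^{-t²} dt`. -/
noncomputable def erf (z : ℝ) : ℝ :=
  2 / Real.sqrt Real.pi * ∫ t in (0 : ℝ)..z, Real.exp (-t ^ 2)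

/-- The critical point `r₁ = -γ/2 + √(k₁ + γ²/4)` of `G(r) = (2k+1) log(r+γ) - r²`,
where `k₁ = k + 1/2`. -/
noncomputable def rOne (γ : ℝ) (k : ℕ) : ℝ :=
  -γ / 2 + Real.sqrt (((k : ℝ) + 1 / 2) + γ ^ 2 / 4)


/-
Since `G(r) = (2k+1) log(r + γ) - r²` is concave with `G'' ≤ -2` and `G'(r₁) = 0`, we have
`G(r) ≤ G(r₁) - (r - r₁)²`, i.e. `(r + γ)^{2k+1} e^{-r²} ≤ e^{G(r₁)} e^{-(r - r₁)²}`.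
Concretely this is the tangent-line bound `t ≤ e^{t-1}` at `t = (r + γ)/(r₁ + γ)`, raised to
the power `2k + 1`, together with `(2k + 1)/(r₁ + γ) = 2r₁`. Bounding the angular integrand
by `(r + γ)^{2k}` and `r` by `r + γ`, the radial integrand is dominated by `2π e^{G(r₁)}`
times a Gaussian centred at `r₁`, whose integral over `{|r - r₁| ≥ Δ}` is `√π (1 - erf Δ)`.
-/

open Real Set

lemma rOne_add_pos (γ : ℝ) (k : ℕ) : 0 < rOne γ k + γ := by
  have h : |γ| / 2 < √((k + 1 / 2 : ℝ) + γ ^ 2 / 4) := by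
    rw [lt_sqrt (by positivity)]
    nlinarith [sq_abs γ, (Nat.cast_nonneg k : (0 : ℝ) ≤ k)]
  rw [rOne]
  linarith [neg_abs_le γ]

/-- `G'(r₁) = 0` in the form `2 r₁ (r₁ + γ) = 2k + 1`. -/
lemma rOne_mul_rOne_add (γ : ℝ) (k : ℕ) : rOne γ k * (rOne γ k + γ) = k + 1 / 2 := by
  have h : √((k + 1 / 2 : ℝ) + γ ^ 2 / 4) ^ 2 = (k + 1 / 2 : ℝ) + γ ^ 2 / 4 :=
    sq_sqrt (by positivity)
  rw [rOne]
  linarith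

lemma pow_le_pow_mul_exp {x y : ℝ} (hx : 0 < x) (hy : 0 ≤ y) (n : ℕ) :
    y ^ n ≤ x ^ n * exp (n * (y - x) / x) := by
  have hyx : y / x ≤ exp (y / x - 1) := by linarith [add_one_le_exp (y / x - 1)]
  calc y ^ n = x ^ n * (y / x) ^ n := by rw [← mul_pow, mul_div_cancel₀ _ hx.ne']
    _ ≤ x ^ n * exp (y / x - 1) ^ n := by gcongr
    _ = x ^ n * exp (n * (y - x) / x) := by
      rw [← exp_nat_mul]
      congr 2
      field_simp

lemma pow_mul_exp_neg_sq_le_rOne (γ : ℝ) (k : ℕ) {r : ℝ} (hr : -γ ≤ r) :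
    (r + γ) ^ (2 * k + 1) * exp (-r ^ 2) ≤
      (rOne γ k + γ) ^ (2 * k + 1) * exp (-rOne γ k ^ 2) * exp (-(r - rOne γ k) ^ 2) := by
  set r₁ := rOne γ k
  have hr₁ : 0 < r₁ + γ := rOne_add_pos γ k
  have hexponent :
      ((2 * k + 1 : ℕ) : ℝ) * ((r + γ) - (r₁ + γ)) / (r₁ + γ) = 2 * r₁ * (r - r₁) := by
    rw [div_eq_iff hr₁.ne']
    push_cast
    linear_combination (-2 * (r - r₁)) * rOne_mul_rOne_add γ k
  have hpow := pow_le_pow_mul_exp hr₁ (by linarith : 0 ≤ r + γ) (2 * k + 1)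
  rw [hexponent] at hpow
  calc (r + γ) ^ (2 * k + 1) * exp (-r ^ 2)
      ≤ (r₁ + γ) ^ (2 * k + 1) * exp (2 * r₁ * (r - r₁)) * exp (-r ^ 2) := by gcongr
    _ = (r₁ + γ) ^ (2 * k + 1) * exp (-r₁ ^ 2) * exp (-(r - r₁) ^ 2) := by
      simp only [mul_assoc, ← exp_add]
      ring_nf

lemma sq_add_sq_add_two_mul_mul_cos_nonneg (r γ θ : ℝ) :
    0 ≤ r ^ 2 + γ ^ 2 + 2 * γ * r * cos θ := by
  nlinarith [sq_nonneg (r + γ * cos θ), sq_nonneg (γ * sin θ), sin_sq_add_cos_sq θ]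

lemma sq_add_sq_add_two_mul_mul_cos_le {r γ : ℝ} (hr : 0 ≤ r) (hγ : 0 ≤ γ) (θ : ℝ) :
    r ^ 2 + γ ^ 2 + 2 * γ * r * cos θ ≤ (r + γ) ^ 2 := by
  nlinarith [mul_nonneg (mul_nonneg hγ hr) (sub_nonneg.2 (cos_le_one θ))]

/-- The angular part of the squared Fock norm of `z ↦ (z + γ)^k` on the circle `|z| = r`. -/
noncomputable def angularIntegral (γ : ℝ) (k : ℕ) (r : ℝ) : ℝ :=
  ∫ θ in (-π)..π, (r ^ 2 + γ ^ 2 + 2 * γ * r * cos θ) ^ k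

lemma angularIntegral_nonneg (γ : ℝ) (k : ℕ) (r : ℝ) : 0 ≤ angularIntegral γ k r :=
  intervalIntegral.integral_nonneg (by linarith [pi_pos]) fun θ _ =>
    pow_nonneg (sq_add_sq_add_two_mul_mul_cos_nonneg r γ θ) k

lemma angularIntegral_le {γ r : ℝ} (hγ : 0 ≤ γ) (hr : 0 ≤ r) (k : ℕ) :
    angularIntegral γ k r ≤ 2 * π * (r + γ) ^ (2 * k) := by
  have hbound (θ : ℝ) : ‖(r ^ 2 + γ ^ 2 + 2 * γ * r * cos θ) ^ k‖ ≤ (r + γ) ^ (2 * k) := by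
    rw [norm_pow, Real.norm_of_nonneg (sq_add_sq_add_two_mul_mul_cos_nonneg r γ θ), pow_mul]
    gcongr
    · exact sq_add_sq_add_two_mul_mul_cos_nonneg r γ θ
    · exact sq_add_sq_add_two_mul_mul_cos_le hr hγ θ
  calc angularIntegral γ k r ≤ ‖angularIntegral γ k r‖ := le_norm_self _
    _ ≤ (r + γ) ^ (2 * k) * |π - -π| :=
      intervalIntegral.norm_integral_le_of_norm_le_const fun θ _ => hbound θ
    _ = 2 * π * (r + γ) ^ (2 * k) := by
      rw [sub_neg_eq_add, abs_of_pos (by linarith [pi_pos])]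
      ring

lemma mul_exp_neg_sq_mul_angularIntegral_le {γ r : ℝ} (hγ : 0 ≤ γ) (hr : 0 ≤ r) (k : ℕ) :
    r * exp (-r ^ 2) * angularIntegral γ k r ≤
      2 * π * ((rOne γ k + γ) ^ (2 * k + 1) * exp (-rOne γ k ^ 2) *
        exp (-(r - rOne γ k) ^ 2)) := by
  calc r * exp (-r ^ 2) * angularIntegral γ k r
      ≤ r * exp (-r ^ 2) * (2 * π * (r + γ) ^ (2 * k)) := by
        gcongr
        exact angularIntegral_le hγ hr k
    _ = 2 * π * ((r + γ) ^ (2 * k) * r * exp (-r ^ 2)) := by ring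
    _ ≤ 2 * π * ((r + γ) ^ (2 * k) * (r + γ) * exp (-r ^ 2)) := by gcongr; linarith
    _ = 2 * π * ((r + γ) ^ (2 * k + 1) * exp (-r ^ 2)) := by rw [pow_succ (r + γ)]
    _ ≤ _ := by
      gcongr 2 * π * ?_
      exact pow_mul_exp_neg_sq_le_rOne γ k (by linarith)

lemma integrable_exp_neg_sq : Integrable fun u : ℝ => exp (-u ^ 2) := by
  simpa using integrable_exp_neg_mul_sq one_pos

lemma integral_exp_neg_sq_symm (Δ : ℝ) :
    ∫ u in (-Δ)..Δ, exp (-u ^ 2) = 2 * ∫ u in (0 : ℝ)..Δ, exp (-u ^ 2) := by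
  have hneg : ∫ u in (-Δ)..0, exp (-u ^ 2) = ∫ u in (0 : ℝ)..Δ, exp (-u ^ 2) := by
    have h := intervalIntegral.integral_comp_neg (a := 0) (b := Δ) fun u => exp (-u ^ 2)
    simp only [neg_sq, neg_zero] at h
    exact h.symm
  rw [← intervalIntegral.integral_add_adjacent_intervals
    integrable_exp_neg_sq.intervalIntegrable integrable_exp_neg_sq.intervalIntegrable, hneg]
  ring

lemma integral_gaussian_abs_tail {Δ : ℝ} (hΔ : 0 ≤ Δ) :
    ∫ u in {u : ℝ | Δ ≤ |u|}, exp (-u ^ 2) = √π * (1 - erf Δ) := by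
  have hmeas : MeasurableSet {u : ℝ | Δ ≤ |u|} :=
    measurableSet_le measurable_const measurable_abs
  have hcompl : {u : ℝ | Δ ≤ |u|}ᶜ = Ioo (-Δ) Δ := by
    ext u
    simp [abs_lt]
  have hmid : ∫ u in Ioo (-Δ) Δ, exp (-u ^ 2) = 2 * ∫ u in (0 : ℝ)..Δ, exp (-u ^ 2) := by
    rw [← integral_Ioc_eq_integral_Ioo, ← intervalIntegral.integral_of_le (by linarith),
      integral_exp_neg_sq_symm]
  have hsplit := integral_add_compl hmeas integrable_exp_neg_sq
  rw [hcompl, hmid, show ∫ u, exp (-u ^ 2) = √π by simpa using integral_gaussian 1] at hsplit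
  have hπ : √π ≠ 0 := by positivity
  rw [erf]
  field_simp
  linarith

lemma integral_gaussian_abs_sub_tail {Δ : ℝ} (hΔ : 0 ≤ Δ) (c : ℝ) :
    ∫ u in {u : ℝ | Δ ≤ |u - c|}, exp (-(u - c) ^ 2) = √π * (1 - erf Δ) := by
  have hmeas : ∀ c : ℝ, MeasurableSet {u : ℝ | Δ ≤ |u - c|} := fun c =>
    measurableSet_le measurable_const (measurable_id.sub_const c).abs
  rw [← integral_gaussian_abs_tail hΔ, ← integral_indicator (hmeas c),
    ← integral_indicator (by simpa using hmeas 0),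
    ← integral_sub_right_eq_self ({u : ℝ | Δ ≤ |u|}.indicator fun u => exp (-u ^ 2)) c]
  rfl

/-- Tail bound: the contribution to the Fock norm from `{r > 0 : |r - r₁| ≥ Δ}` lies
between `0` and `2π^{3/2} (r₁+γ)^{2k+1} e^{-r₁²} (1 - erf Δ)`. -/
theorem radial_tail_bounds (Δ : ℝ) (hΔ : 0 ≤ Δ) (k : ℕ) (γ : ℝ) (hγ : 0 < γ) :
    0 ≤ (∫ r in {r : ℝ | 0 < r ∧ Δ ≤ |r - rOne γ k|},
        r * Real.exp (-r ^ 2) *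
          ∫ θ in (-Real.pi)..Real.pi, (r ^ 2 + γ ^ 2 + 2 * γ * r * Real.cos θ) ^ k) ∧
    (∫ r in {r : ℝ | 0 < r ∧ Δ ≤ |r - rOne γ k|},
        r * Real.exp (-r ^ 2) *
          ∫ θ in (-Real.pi)..Real.pi, (r ^ 2 + γ ^ 2 + 2 * γ * r * Real.cos θ) ^ k) ≤
      2 * Real.pi ^ ((3 : ℝ) / 2) * (rOne γ k + γ) ^ (2 * k + 1) *
        Real.exp (-(rOne γ k) ^ 2) * (1 - erf Δ) := by
  change 0 ≤ ∫ r in _, r * exp (-r ^ 2) * angularIntegral γ k r ∧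
    ∫ r in _, r * exp (-r ^ 2) * angularIntegral γ k r ≤ _
  set r₁ := rOne γ k
  set s := {r : ℝ | 0 < r ∧ Δ ≤ |r - r₁|}
  set M := (r₁ + γ) ^ (2 * k + 1) * exp (-r₁ ^ 2)
  have hs : MeasurableSet s :=
    measurableSet_Ioi.inter (measurableSet_le measurable_const (measurable_id.sub_const r₁).abs)
  have hf_nonneg : ∀ r ∈ s, 0 ≤ r * exp (-r ^ 2) * angularIntegral γ k r :=
    fun r hr => mul_nonneg (by have := hr.1; positivity) (angularIntegral_nonneg γ k r)
  have hg : Integrable fun r => 2 * π * (M * exp (-(r - r₁) ^ 2)) :=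
    ((integrable_exp_neg_sq.comp_sub_right r₁).const_mul M).const_mul _
  have hM : 0 < M := by have := rOne_add_pos γ k; positivity
  have hπ : π ^ ((3 : ℝ) / 2) = π * √π := by
    rw [show (3 : ℝ) / 2 = 1 + 1 / 2 by norm_num, rpow_add pi_pos, rpow_one, ← sqrt_eq_rpow]
  refine ⟨setIntegral_nonneg hs hf_nonneg, ?_⟩
  calc _ ≤ ∫ r in s, 2 * π * (M * exp (-(r - r₁) ^ 2)) :=
        integral_mono_of_nonneg (ae_restrict_of_forall_mem hs hf_nonneg) hg.integrableOn
          (ae_restrict_of_forall_mem hs fun r hr =>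
            mul_exp_neg_sq_mul_angularIntegral_le hγ.le hr.1.le k)
    _ ≤ ∫ r in {r : ℝ | Δ ≤ |r - r₁|}, 2 * π * (M * exp (-(r - r₁) ^ 2)) :=
        setIntegral_mono_set hg.integrableOn (ae_of_all _ fun r => by positivity)
          (ae_of_all _ fun r hr => hr.2)
    _ = _ := by
      rw [integral_const_mul, integral_const_mul, integral_gaussian_abs_sub_tail hΔ, hπ]
      ring
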